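/- Let G be a finite simple graph on n vertices and let p(x,y|v,w) be a synchronous vectorial correlation with inputs and outputs V(G) that is a winning strategy for the homomorphism game from G to G (i.e. p(x,y|v,w) = 0 whenever (v,w) ∈ E(G) and (x,y) ∉ E(G)). Define p₁ = p and recursively p_{k+1}(x,y|v,w) = Σ_{a,b} p(x,y|a,b) p_k(a,b|v,w), and for a Banach generalized limit glim set r(x,y|v,w) = glim(k ↦ p_k(x,y|v,w)). Then r is again a synchronous vectorial correlation with inputs and outputs V(G) that is a winning strategy for the homomorphism game from G to G, and moreover: (1) the associated map satisfies φ_r(A)_{x,y} = glim(k ↦ (φ_p^k(A))_{x,y}) for all A ∈ M_n(ℂ); and (2) r(x,y|v,w) = Σ_{a,b} r(x,y|a,b) r(a,b|v,w), so that φ_r ∘ φ_r = φ_r. -/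

import Mathlib

/-!
Composing correlations, `(p ∘ q)(x,y|v,w) = ∑ a b, p(x,y|a,b) q(a,b|v,w)`, corresponds to
tensoring realizations, `X''_{v,x} = ∑ a, X_{a,x} ⊗ X'_{v,a}`; so every iterate `p_k` is a
vectorial correlation, and replacing vectors by their Gram matrix puts all of them in one
Euclidean space. A realization amounts to a positive semidefinite Gram matrix obeying finitely
many linear constraints, and a Banach limit is linear and positive, so the entrywise limit of the
Gram matrices of the `p_k` is a Gram matrix realizing `r`. Synchronicity and the winning
condition are zero patterns, stable under composition and under limits.

Shift invariance makes `ψ(A) = glim_k φ_p^k(A)` a fixed point of `φ_p`, hence `ψ ∘ ψ = ψ`.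
Since `φ_r = ψ`, and `φ` is injective and turns composition of correlations into composition of
maps, this gives `r ∘ r = r`.
-/

open scoped InnerProductSpace ComplexOrder

/-- A realization of a (complex-valued, but in fact nonnegative real) family
`p(x,y|v,w)` as a vectorial correlation. -/
structure VectRealization {I O : Type} [Fintype O] (p : O → O → I → I → ℂ) where
  H : Type
  [nacg : NormedAddCommGroup H]
  [ips : InnerProductSpace ℂ H]
  [cs : CompleteSpace H]
  X : I → O → H
  Y : I → O → H
  orthX : ∀ v : I, ∀ x y : O, x ≠ y → ⟪X v x, X v y⟫_ℂ = 0
  orthY : ∀ w : I, ∀ x y : O, x ≠ y → ⟪Y w x, Y w y⟫_ℂ = 0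
  sumEq : ∀ v w : I, ∑ x, X v x = ∑ y, Y w y
  normOne : ∀ v : I, ‖∑ x, X v x‖ = 1
  nonneg : ∀ v w : I, ∀ x y : O, 0 ≤ p x y v w
  eq : ∀ (x y : O) (v w : I), p x y v w = ⟪X v x, Y w y⟫_ℂ

/-- `p` is a vectorial correlation if it admits a vectorial realization. -/
def IsVectCorrelation {I O : Type} [Fintype O] (p : O → O → I → I → ℂ) : Prop :=
  Nonempty (VectRealization p)

/-- `p` is synchronous: `p(x,y|v,v) = 0` for all `v` and all `x ≠ y`. -/
def Synchronous {I O : Type} (p : O → O → I → I → ℂ) : Prop :=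
  ∀ (v : I) (x y : O), x ≠ y → p x y v v = 0

/-- The winning condition for the graph homomorphism game from `G` to `H`. -/
def WinningFor {VG VH : Type} (G : SimpleGraph VG) (Hg : SimpleGraph VH)
    (p : VH → VH → VG → VG → ℂ) : Prop :=
  ∀ (v w : VG) (x y : VH), G.Adj v w → ¬ Hg.Adj x y → p x y v w = 0

/-- A Banach generalized limit. -/
def IsBanachLimit (glim : (ℕ → ℂ) →ₗ[ℂ] ℂ) : Prop :=
  (∀ (a : ℕ → ℂ) (L : ℂ), Filter.Tendsto a Filter.atTop (nhds L) → glim a = L) ∧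
  (∀ a : ℕ → ℂ, (∃ C : ℝ, ∀ k, ‖a k‖ ≤ C) → (∀ k, 0 ≤ a k) → 0 ≤ glim a) ∧
  (∀ a : ℕ → ℂ, (∃ C : ℝ, ∀ k, ‖a k‖ ≤ C) → glim (fun k => a (k + 1)) = glim a)

/-- The map `φ_p(A)_{x,y} = Σ_{v,w} p(x,y|v,w) A_{v,w}`. -/
noncomputable def phiMap {n : ℕ} (p : Fin n → Fin n → Fin n → Fin n → ℂ)
    (A : Matrix (Fin n) (Fin n) ℂ) : Matrix (Fin n) (Fin n) ℂ :=
  Matrix.of fun x y => ∑ v, ∑ w, p x y v w * A v w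

open Finset Matrix

section Functional

variable {α : Type} (Λ : (α → ℂ) →ₗ[ℂ] ℂ)

lemma LinearMap.map_sum_fun {ι : Type} (s : Finset ι) (f : ι → α → ℂ) :
    Λ (fun k => ∑ i ∈ s, f i k) = ∑ i ∈ s, Λ (f i) := by
  rw [← Finset.sum_fn, map_sum]

lemma LinearMap.map_const_mul (c : ℂ) (a : α → ℂ) : Λ (fun k => c * a k) = c * Λ a :=
  map_smul Λ c a

end Functional

namespace IsBanachLimit

variable {glim : (ℕ → ℂ) →ₗ[ℂ] ℂ}

lemma map_const (hglim : IsBanachLimit glim) (c : ℂ) : glim (fun _ => c) = c :=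
  hglim.1 _ c tendsto_const_nhds

lemma map_add_shift (hglim : IsBanachLimit glim) {a : ℕ → ℂ} {C : ℝ} (ha : ∀ k, ‖a k‖ ≤ C)
    (m : ℕ) : glim (fun k => a (m + k)) = glim a := by
  induction m with
  | zero => simp only [Nat.zero_add]
  | succ m ih =>
    simp only [Nat.add_right_comm m 1, ← ih]
    exact hglim.2.2 (fun k => a (m + k)) ⟨C, fun k => ha _⟩

end IsBanachLimit

lemma Fintype.sum_comm₄ {ι κ M : Type} [Fintype ι] [Fintype κ] [AddCommMonoid M]
    (f : ι → ι → κ → κ → M) :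
    ∑ v, ∑ w, ∑ a, ∑ b, f v w a b = ∑ a, ∑ b, ∑ v, ∑ w, f v w a b := by
  simpa only [Fintype.sum_prod_type] using Finset.sum_comm (s := univ) (t := univ)
    (f := fun (vw : ι × ι) (ab : κ × κ) => f vw.1 vw.2 ab.1 ab.2)

lemma Matrix.star_dotProduct_mulVec_eq_sum {J : Type} [Fintype J] (N : Matrix J J ℂ)
    (c : J → ℂ) : star c ⬝ᵥ (N *ᵥ c) = ∑ i, ∑ j, star (c i) * c j * N i j := by
  simp only [dotProduct, mulVec, Finset.mul_sum, Pi.star_apply]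
  exact Finset.sum_congr rfl fun i _ => Finset.sum_congr rfl fun j _ => by ring

section PositiveSemidefinite

variable {J : Type} [Fintype J] [DecidableEq J]

/- Over `ℂ` a matrix with a nonnegative quadratic form is automatically Hermitian. -/
lemma Matrix.posSemidef_of_forall_dotProduct_mulVec_nonneg {M : Matrix J J ℂ}
    (hM : ∀ c, 0 ≤ star c ⬝ᵥ (M *ᵥ c)) : M.PosSemidef := by
  rw [← isPositive_toEuclideanLin_iff, LinearMap.isPositive_iff_complex]
  intro c
  obtain ⟨hre, him⟩ := Complex.nonneg_iff.mp (hM c.ofLp)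
  simp only [EuclideanSpace.inner_eq_star_dotProduct, Matrix.ofLp_toLpLin, Matrix.toLin'_apply,
    dotProduct_star, dotProduct_comm (M *ᵥ c.ofLp)]
  refine ⟨Complex.ext ?_ ?_, ?_⟩ <;> simp [hre, ← him]

lemma Matrix.posSemidef_of_limit (Λ : (ℕ → ℂ) →ₗ[ℂ] ℂ)
    (hpos : ∀ a : ℕ → ℂ, (∃ C : ℝ, ∀ k, ‖a k‖ ≤ C) → (∀ k, 0 ≤ a k) → 0 ≤ Λ a)
    {M : ℕ → Matrix J J ℂ} (hM : ∀ k, (M k).PosSemidef) {C : ℝ} (hC : ∀ k i j, ‖M k i j‖ ≤ C) :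
    (Matrix.of fun i j => Λ fun k => M k i j).PosSemidef := by
  refine posSemidef_of_forall_dotProduct_mulVec_nonneg fun c => ?_
  have hlim : star c ⬝ᵥ ((Matrix.of fun i j => Λ fun k => M k i j) *ᵥ c)
      = Λ fun k => star c ⬝ᵥ (M k *ᵥ c) := by
    simp only [star_dotProduct_mulVec_eq_sum, Λ.map_sum_fun, Λ.map_const_mul, of_apply]
  rw [hlim]
  refine hpos _ ⟨∑ i, ∑ j, ‖c i‖ * ‖c j‖ * C, fun k => ?_⟩
    fun k => (hM k).dotProduct_mulVec_nonneg c
  rw [star_dotProduct_mulVec_eq_sum]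
  refine (norm_sum_le _ _).trans <| sum_le_sum fun i _ => (norm_sum_le _ _).trans <|
    sum_le_sum fun j _ => ?_
  rw [norm_mul, norm_mul, norm_star]
  gcongr
  exact hC k i j

lemma Matrix.PosSemidef.exists_gram_eq {M : Matrix J J ℂ} (hM : M.PosSemidef) :
    ∃ Z : J → EuclideanSpace ℂ J, gram ℂ Z = M := by
  open scoped MatrixOrder in
  obtain ⟨B, rfl⟩ := CStarAlgebra.nonneg_iff_eq_star_mul_self.mp (nonneg_iff_posSemidef.mpr hM)
  refine ⟨fun j => WithLp.toLp 2 fun i => B i j, ?_⟩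
  ext j j'
  simp [Matrix.mul_apply, PiLp.inner_apply, mul_comm]

end PositiveSemidefinite

section InnerProduct

open scoped TensorProduct

variable {H H' : Type} [NormedAddCommGroup H] [InnerProductSpace ℂ H]
  [NormedAddCommGroup H'] [InnerProductSpace ℂ H']

lemma norm_le_of_inner_eq_inner_self {u s : H} (h : ⟪u, s⟫_ℂ = ⟪u, u⟫_ℂ) : ‖u‖ ≤ ‖s‖ := by
  have key : ‖u‖ * ‖u‖ ≤ ‖u‖ * ‖s‖ := by
    rw [← inner_self_eq_norm_mul_norm (𝕜 := ℂ), ← h]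
    exact (RCLike.re_le_norm _).trans (norm_inner_le_norm u s)
  rcases (norm_nonneg u).eq_or_lt with hu | hu
  · rw [← hu]; exact norm_nonneg s
  · exact le_of_mul_le_mul_left key hu

lemma norm_le_norm_sum_of_orthogonal {ι : Type} [Fintype ι] {u : ι → H}
    (horth : ∀ i j, i ≠ j → ⟪u i, u j⟫_ℂ = 0) (i : ι) : ‖u i‖ ≤ ‖∑ j, u j‖ := by
  refine norm_le_of_inner_eq_inner_self ?_
  rw [inner_sum, Finset.sum_eq_single i (fun j _ hji => horth i j hji.symm) (by simp)]

lemma inner_sum_sum {ι κ : Type} [Fintype ι] [Fintype κ] (u : ι → H) (w : κ → H) :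
    ⟪∑ i, u i, ∑ j, w j⟫_ℂ = ∑ i, ∑ j, ⟪u i, w j⟫_ℂ := by
  rw [sum_inner]; simp only [inner_sum]

lemma inner_sum_tmul_sum_tmul {ι : Type} [Fintype ι] (u u' : ι → H) (z z' : ι → H') :
    ⟪∑ a, u a ⊗ₜ[ℂ] z a, ∑ b, u' b ⊗ₜ[ℂ] z' b⟫_ℂ = ∑ a, ∑ b, ⟪u a, u' b⟫_ℂ * ⟪z a, z' b⟫_ℂ := by
  simp only [inner_sum_sum, TensorProduct.inner_tmul]

end InnerProduct

/- A `VectRealization` whose Hilbert space is a parameter rather than a field, and without the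
nonnegativity of `p`. -/
structure IsRealization {I O H : Type} [Fintype O] [NormedAddCommGroup H] [InnerProductSpace ℂ H]
    (p : O → O → I → I → ℂ) (X Y : I → O → H) : Prop where
  orthX : ∀ v x y, x ≠ y → ⟪X v x, X v y⟫_ℂ = 0
  orthY : ∀ w x y, x ≠ y → ⟪Y w x, Y w y⟫_ℂ = 0
  sumEq : ∀ v w, ∑ x, X v x = ∑ y, Y w y
  normOne : ∀ v, ‖∑ x, X v x‖ = 1
  eq : ∀ x y v w, p x y v w = ⟪X v x, Y w y⟫_ℂ

/- The Gram matrix of a realization, with `X v x` at index `inl (v, x)` and `Y w y` at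
`inr (w, y)`; `sumX`, `sumY` and `sumXY` say that all the sums `∑ x, X v x` and `∑ y, Y w y`
are one and the same unit vector. -/
structure IsCorrelationGram {I O : Type} [Fintype O] (p : O → O → I → I → ℂ)
    (M : Matrix (I × O ⊕ I × O) (I × O ⊕ I × O) ℂ) : Prop where
  orthX : ∀ v x y, x ≠ y → M (.inl (v, x)) (.inl (v, y)) = 0
  orthY : ∀ w x y, x ≠ y → M (.inr (w, x)) (.inr (w, y)) = 0
  sumX : ∀ v, ∑ x, ∑ y, M (.inl (v, x)) (.inl (v, y)) = 1
  sumY : ∀ w, ∑ x, ∑ y, M (.inr (w, x)) (.inr (w, y)) = 1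
  sumXY : ∀ v w, ∑ x, ∑ y, M (.inl (v, x)) (.inr (w, y)) = 1
  eq : ∀ x y v w, p x y v w = M (.inl (v, x)) (.inr (w, y))

def corrComp {I A O : Type} [Fintype A] (p : O → O → A → A → ℂ) (q : A → A → I → I → ℂ) :
    O → O → I → I → ℂ :=
  fun x y v w => ∑ a, ∑ b, p x y a b * q a b v w

namespace IsRealization

variable {I O H : Type} [Fintype O] [NormedAddCommGroup H] [InnerProductSpace ℂ H]
  {p : O → O → I → I → ℂ} {X Y : I → O → H}

lemma isVectCorrelation [CompleteSpace H] (h : IsRealization p X Y)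
    (hp : ∀ v w x y, 0 ≤ p x y v w) : IsVectCorrelation p :=
  ⟨⟨H, X, Y, h.orthX, h.orthY, h.sumEq, h.normOne, hp, h.eq⟩⟩

lemma nonempty_output (h : IsRealization p X Y) (v : I) : Nonempty O := by
  by_contra hO
  have := h.normOne v
  simp [not_nonempty_iff.mp hO] at this

lemma norm_X_le (h : IsRealization p X Y) (v : I) (x : O) : ‖X v x‖ ≤ 1 :=
  h.normOne v ▸ norm_le_norm_sum_of_orthogonal (h.orthX v) x

lemma norm_Y_le (h : IsRealization p X Y) (w : I) (y : O) : ‖Y w y‖ ≤ 1 :=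
  h.normOne w ▸ h.sumEq w w ▸ norm_le_norm_sum_of_orthogonal (h.orthY w) y

lemma norm_le_one (h : IsRealization p X Y) (x y : O) (v w : I) : ‖p x y v w‖ ≤ 1 := by
  rw [h.eq]
  calc ‖⟪X v x, Y w y⟫_ℂ‖ ≤ ‖X v x‖ * ‖Y w y‖ := norm_inner_le_norm _ _
    _ ≤ 1 := mul_le_one₀ (h.norm_X_le v x) (norm_nonneg _) (h.norm_Y_le w y)

lemma _root_.isRealization_iff_isCorrelationGram {Z : I × O ⊕ I × O → H} :
    IsRealization p (fun v x => Z (.inl (v, x))) (fun w y => Z (.inr (w, y))) ↔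
      IsCorrelationGram p (gram ℂ Z) := by
  have inner_self_of_norm {u : H} (hu : ‖u‖ = 1) : ⟪u, u⟫_ℂ = 1 := by
    simp [inner_self_eq_norm_sq_to_K, hu]
  constructor
  · intro h
    have hY : ∀ w, ‖∑ y, Z (.inr (w, y))‖ = 1 := fun w => h.sumEq w w ▸ h.normOne w
    refine ⟨h.orthX, h.orthY, fun v => ?_, fun w => ?_, fun v w => ?_, h.eq⟩ <;>
      simp only [gram_apply, ← inner_sum_sum]
    · exact inner_self_of_norm (h.normOne v)
    · exact inner_self_of_norm (hY w)
    · rw [h.sumEq v w]; exact inner_self_of_norm (hY w)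
  · intro h
    have hS : ∀ v w, ⟪∑ x, Z (.inl (v, x)), ∑ y, Z (.inr (w, y))⟫_ℂ = 1 := by
      simpa only [gram_apply, ← inner_sum_sum] using h.sumXY
    refine ⟨h.orthX, h.orthY, fun v w => ?_, fun v => ?_, h.eq⟩
    · rw [← sub_eq_zero, ← inner_self_eq_zero (𝕜 := ℂ)]
      have hX := h.sumX v
      have hY := h.sumY w
      simp only [gram_apply, ← inner_sum_sum] at hX hY
      rw [inner_sub_left, inner_sub_right, inner_sub_right,
        ← inner_conj_symm (∑ y, Z (.inr (w, y))), hS, hX, hY]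
      simp
    · have hX := h.sumX v
      simp only [gram_apply, ← inner_sum_sum] at hX
      have hre := congrArg RCLike.re hX
      rw [inner_self_eq_norm_sq, RCLike.one_re] at hre
      exact (pow_eq_one_iff_of_nonneg (norm_nonneg _) two_ne_zero).mp hre

variable [Fintype I] [DecidableEq I] [DecidableEq O]

lemma exists_euclidean (h : IsRealization p X Y) :
    ∃ X' Y' : I → O → EuclideanSpace ℂ (I × O ⊕ I × O), IsRealization p X' Y' := by
  let Z := Sum.elim (Function.uncurry X) (Function.uncurry Y)
  obtain ⟨Z', hZ'⟩ := (posSemidef_gram ℂ Z).exists_gram_eq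
  have hZ : IsCorrelationGram p (gram ℂ Z) := isRealization_iff_isCorrelationGram.mp h
  exact ⟨_, _, isRealization_iff_isCorrelationGram.mpr (hZ' ▸ hZ)⟩

end IsRealization

section Limit

variable {I O : Type} (Λ : (ℕ → ℂ) →ₗ[ℂ] ℂ) {q : ℕ → O → O → I → I → ℂ}

lemma Synchronous.limit (hΛ : ∀ c, Λ (fun _ => c) = c) (h : ∀ k, Synchronous (q k)) :
    Synchronous fun x y v w => Λ fun k => q k x y v w := fun v x y hxy => by
  simp only [h _ v x y hxy, hΛ]

lemma WinningFor.limit (hΛ : ∀ c, Λ (fun _ => c) = c) {G : SimpleGraph I}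
    {H : SimpleGraph O} (h : ∀ k, WinningFor G H (q k)) :
    WinningFor G H fun x y v w => Λ fun k => q k x y v w := fun v w x y hvw hxy => by
  simp only [h _ v w x y hvw hxy, hΛ]

variable [Fintype O]

lemma IsCorrelationGram.limit (hΛ : ∀ c, Λ (fun _ => c) = c)
    {M : ℕ → Matrix (I × O ⊕ I × O) (I × O ⊕ I × O) ℂ}
    (h : ∀ k, IsCorrelationGram (q k) (M k)) :
    IsCorrelationGram (fun x y v w => Λ fun k => q k x y v w)
      (Matrix.of fun i j => Λ fun k => M k i j) := by
  refine ⟨fun v x y hxy => ?_, fun w x y hxy => ?_, fun v => ?_, fun w => ?_, fun v w => ?_,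
    fun x y v w => ?_⟩ <;> simp only [of_apply, ← Λ.map_sum_fun]
  · simpa only [(h _).orthX v x y hxy] using hΛ 0
  · simpa only [(h _).orthY w x y hxy] using hΛ 0
  · simpa only [(h _).sumX v] using hΛ 1
  · simpa only [(h _).sumY w] using hΛ 1
  · simpa only [(h _).sumXY v w] using hΛ 1
  · simp only [(h _).eq]

variable [Fintype I] [DecidableEq I] [DecidableEq O]
  {H : Type} [NormedAddCommGroup H] [InnerProductSpace ℂ H]

lemma IsRealization.limit (hΛ : ∀ c, Λ (fun _ => c) = c)
    (hpos : ∀ a : ℕ → ℂ, (∃ C : ℝ, ∀ k, ‖a k‖ ≤ C) → (∀ k, 0 ≤ a k) → 0 ≤ Λ a)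
    {X Y : ℕ → I → O → H} (h : ∀ k, IsRealization (q k) (X k) (Y k)) :
    ∃ X' Y' : I → O → EuclideanSpace ℂ (I × O ⊕ I × O),
      IsRealization (fun x y v w => Λ fun k => q k x y v w) X' Y' := by
  let Z k := Sum.elim (Function.uncurry (X k)) (Function.uncurry (Y k))
  have hZ : ∀ k i, ‖Z k i‖ ≤ 1 := by
    rintro k (⟨v, x⟩ | ⟨w, y⟩)
    exacts [(h k).norm_X_le v x, (h k).norm_Y_le w y]
  have hgram : ∀ k i j, ‖gram ℂ (Z k) i j‖ ≤ 1 := fun k i j =>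
    (norm_inner_le_norm _ _).trans (mul_le_one₀ (hZ k i) (norm_nonneg _) (hZ k j))
  obtain ⟨Z', hZ'⟩ :=
    (posSemidef_of_limit Λ hpos (fun k => posSemidef_gram ℂ (Z k)) hgram).exists_gram_eq
  exact ⟨_, _, isRealization_iff_isCorrelationGram.mpr
    (hZ' ▸ IsCorrelationGram.limit Λ hΛ fun k => isRealization_iff_isCorrelationGram.mp (h k))⟩

end Limit

section Composition

variable {I A O : Type} [Fintype A] {p : O → O → A → A → ℂ} {q : A → A → I → I → ℂ}

lemma corrComp_nonneg (hp : ∀ x y a b, 0 ≤ p x y a b) (hq : ∀ a b v w, 0 ≤ q a b v w)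
    (x y : O) (v w : I) : 0 ≤ corrComp p q x y v w :=
  Finset.sum_nonneg fun a _ => Finset.sum_nonneg fun b _ => mul_nonneg (hp x y a b) (hq a b v w)

lemma Synchronous.comp (hp : Synchronous p) (hq : Synchronous q) :
    Synchronous (corrComp p q) := by
  intro v x y hxy
  refine Finset.sum_eq_zero fun a _ => Finset.sum_eq_zero fun b _ => ?_
  obtain rfl | hab := eq_or_ne a b
  · rw [hp a x y hxy, zero_mul]
  · rw [hq v a b hab, mul_zero]

lemma WinningFor.comp {G : SimpleGraph I} {K : SimpleGraph A} {H : SimpleGraph O}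
    (hp : WinningFor K H p) (hq : WinningFor G K q) : WinningFor G H (corrComp p q) := by
  intro v w x y hvw hxy
  refine Finset.sum_eq_zero fun a _ => Finset.sum_eq_zero fun b _ => ?_
  by_cases hab : K.Adj a b
  · rw [hp a b x y hab hxy, zero_mul]
  · rw [hq v w a b hvw hab, mul_zero]

open scoped TensorProduct in
lemma IsRealization.comp [Fintype O] {H₁ H₂ : Type} [NormedAddCommGroup H₁]
    [InnerProductSpace ℂ H₁] [NormedAddCommGroup H₂] [InnerProductSpace ℂ H₂]
    {X Y : A → O → H₁} {X' Y' : I → A → H₂} (hp : IsRealization p X Y)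
    (hq : IsRealization q X' Y') :
    IsRealization (corrComp p q) (fun v x => ∑ a, X a x ⊗ₜ[ℂ] X' v a)
      (fun w y => ∑ b, Y b y ⊗ₜ[ℂ] Y' w b) := by
  have hX : ∀ (a₀ : A) (u : A → H₂),
      ∑ x, ∑ a, X a x ⊗ₜ[ℂ] u a = (∑ x, X a₀ x) ⊗ₜ[ℂ] ∑ a, u a := fun a₀ u => by
    simp_rw [Finset.sum_comm (γ := O), ← TensorProduct.sum_tmul, hp.sumEq _ a₀, ← hp.sumEq a₀ a₀,
      TensorProduct.tmul_sum]
  have hY : ∀ (a₀ : A) (u : A → H₂),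
      ∑ y, ∑ b, Y b y ⊗ₜ[ℂ] u b = (∑ x, X a₀ x) ⊗ₜ[ℂ] ∑ b, u b := fun a₀ u => by
    simp_rw [Finset.sum_comm (γ := O), ← TensorProduct.sum_tmul, ← hp.sumEq a₀,
      TensorProduct.tmul_sum]
  refine ⟨fun v x y hxy => ?_, fun w x y hxy => ?_, fun v w => ?_, fun v => ?_, fun x y v w => ?_⟩
  · rw [inner_sum_tmul_sum_tmul]
    refine Finset.sum_eq_zero fun a _ => Finset.sum_eq_zero fun b _ => ?_
    obtain rfl | hab := eq_or_ne a b
    · rw [hp.orthX a x y hxy, zero_mul]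
    · rw [hq.orthX v a b hab, mul_zero]
  · rw [inner_sum_tmul_sum_tmul]
    refine Finset.sum_eq_zero fun a _ => Finset.sum_eq_zero fun b _ => ?_
    obtain rfl | hab := eq_or_ne a b
    · rw [hp.orthY a x y hxy, zero_mul]
    · rw [hq.orthY w a b hab, mul_zero]
  · obtain ⟨a₀⟩ := hq.nonempty_output v
    rw [hX a₀, hY a₀, hq.sumEq v w]
  · obtain ⟨a₀⟩ := hq.nonempty_output v
    rw [hX a₀, TensorProduct.norm_tmul, hp.normOne, hq.normOne, one_mul]
  · rw [inner_sum_tmul_sum_tmul]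
    simp only [corrComp, hp.eq, hq.eq]

end Composition

section Iterates

variable {O : Type} [Fintype O] {p : O → O → O → O → ℂ}

lemma eq_iterate_corrComp {pk : ℕ → O → O → O → O → ℂ} (hpk1 : pk 1 = p)
    (hpkrec : ∀ k, 1 ≤ k → ∀ x y v w, pk (k + 1) x y v w = ∑ a, ∑ b, p x y a b * pk k a b v w)
    (k : ℕ) : pk (k + 1) = (corrComp p)^[k] p := by
  induction k with
  | zero => exact hpk1
  | succ k ih =>
    rw [Function.iterate_succ_apply', ← ih]
    funext x y v w
    exact hpkrec (k + 1) k.succ_pos x y v w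

lemma IsRealization.exists_euclidean_iterate [DecidableEq O] {H : Type} [NormedAddCommGroup H]
    [InnerProductSpace ℂ H] {X Y : O → O → H} (h : IsRealization p X Y) (k : ℕ) :
    ∃ X' Y' : O → O → EuclideanSpace ℂ (O × O ⊕ O × O),
      IsRealization ((corrComp p)^[k] p) X' Y' :=
  Function.Iterate.rec _ h.exists_euclidean (fun _ ⟨_, _, hq⟩ => (h.comp hq).exists_euclidean) k

end Iterates

section PhiMap

variable {n : ℕ}

lemma phiMap_corrComp (p q : Fin n → Fin n → Fin n → Fin n → ℂ) :
    phiMap (corrComp p q) = phiMap p ∘ phiMap q := by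
  funext A
  ext x y
  simp only [phiMap, corrComp, Function.comp_apply, of_apply, Finset.sum_mul, Finset.mul_sum,
    mul_assoc]
  exact Fintype.sum_comm₄ _

lemma phiMap_iterate_corrComp (p : Fin n → Fin n → Fin n → Fin n → ℂ) (k : ℕ) :
    phiMap ((corrComp p)^[k] p) = (phiMap p)^[k + 1] := by
  induction k with
  | zero => rfl
  | succ k ih =>
    rw [Function.iterate_succ_apply', phiMap_corrComp, ih, ← Function.iterate_succ' (phiMap p)]

lemma phiMap_single (p : Fin n → Fin n → Fin n → Fin n → ℂ) (x y v w : Fin n) :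
    phiMap p (single v w 1) x y = p x y v w := by
  simp [phiMap, single_apply, ite_and]

lemma phiMap_injective : Function.Injective (phiMap (n := n)) := fun p q h => by
  funext x y v w
  rw [← phiMap_single p, ← phiMap_single q, h]

lemma corrComp_self_eq_of_phiMap_idempotent {r : Fin n → Fin n → Fin n → Fin n → ℂ}
    (h : phiMap r ∘ phiMap r = phiMap r) : corrComp r r = r :=
  phiMap_injective (by rw [phiMap_corrComp, h])

lemma phiMap_limit (p : Fin n → Fin n → Fin n → Fin n → ℂ) {α : Type} (Λ : (α → ℂ) →ₗ[ℂ] ℂ)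
    (A : α → Matrix (Fin n) (Fin n) ℂ) :
    phiMap p (of fun x y => Λ fun j => A j x y) = of fun x y => Λ fun j => phiMap p (A j) x y := by
  ext x y
  simp only [phiMap, of_apply, Λ.map_sum_fun, Λ.map_const_mul]

lemma norm_apply_le_sum_norm (A : Matrix (Fin n) (Fin n) ℂ) (x y : Fin n) :
    ‖A x y‖ ≤ ∑ v, ∑ w, ‖A v w‖ :=
  (single_le_sum (f := fun w => ‖A x w‖) (fun _ _ => norm_nonneg _) (mem_univ y)).trans
    (single_le_sum (f := fun v => ∑ w, ‖A v w‖)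
      (fun _ _ => sum_nonneg fun _ _ => norm_nonneg _) (mem_univ x))

lemma norm_phiMap_apply_le {p : Fin n → Fin n → Fin n → Fin n → ℂ}
    (hp : ∀ x y v w, ‖p x y v w‖ ≤ 1) (A : Matrix (Fin n) (Fin n) ℂ) (x y : Fin n) :
    ‖phiMap p A x y‖ ≤ ∑ v, ∑ w, ‖A v w‖ := by
  change ‖∑ v, ∑ w, p x y v w * A v w‖ ≤ _
  refine (norm_sum_le _ _).trans <| sum_le_sum fun v _ => (norm_sum_le _ _).trans <|
    sum_le_sum fun w _ => ?_
  rw [norm_mul]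
  exact mul_le_of_le_one_left (norm_nonneg _) (hp x y v w)

end PhiMap

section GlimIterate

variable {n : ℕ} {glim : (ℕ → ℂ) →ₗ[ℂ] ℂ} {p : Fin n → Fin n → Fin n → Fin n → ℂ}

def glimIterate (glim : (ℕ → ℂ) →ₗ[ℂ] ℂ)
    (T : Matrix (Fin n) (Fin n) ℂ → Matrix (Fin n) (Fin n) ℂ) (A : Matrix (Fin n) (Fin n) ℂ) :
    Matrix (Fin n) (Fin n) ℂ :=
  of fun x y => glim fun k => (T^[k] A) x y

lemma norm_phiMap_iterate_apply_le (hp : ∀ k x y v w, ‖(corrComp p)^[k] p x y v w‖ ≤ 1)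
    (k : ℕ) (A : Matrix (Fin n) (Fin n) ℂ) (x y : Fin n) :
    ‖((phiMap p)^[k] A) x y‖ ≤ ∑ v, ∑ w, ‖A v w‖ := by
  cases k with
  | zero => exact norm_apply_le_sum_norm A x y
  | succ k => rw [← phiMap_iterate_corrComp]; exact norm_phiMap_apply_le (hp k) A x y

lemma phiMap_iterate_glimIterate (hglim : IsBanachLimit glim)
    (hp : ∀ k x y v w, ‖(corrComp p)^[k] p x y v w‖ ≤ 1) (A : Matrix (Fin n) (Fin n) ℂ) (K : ℕ) :
    (phiMap p)^[K] (glimIterate glim (phiMap p) A) = glimIterate glim (phiMap p) A := by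
  have hshifted : (phiMap p)^[K] (glimIterate glim (phiMap p) A)
      = of fun x y => glim fun j => ((phiMap p)^[K + j] A) x y := by
    induction K with
    | zero => simp only [Function.iterate_zero_apply, Nat.zero_add, glimIterate]
    | succ K ih =>
      rw [Function.iterate_succ_apply', ih, phiMap_limit]
      simp only [Nat.add_right_comm K 1, Function.iterate_succ_apply']
  rw [hshifted]
  ext x y
  exact hglim.map_add_shift (norm_phiMap_iterate_apply_le hp · A x y) K

lemma glimIterate_idempotent (hglim : IsBanachLimit glim)
    (hp : ∀ k x y v w, ‖(corrComp p)^[k] p x y v w‖ ≤ 1) :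
    glimIterate glim (phiMap p) ∘ glimIterate glim (phiMap p) = glimIterate glim (phiMap p) := by
  funext A
  ext x y
  change glim (fun k => ((phiMap p)^[k] (glimIterate glim (phiMap p) A)) x y) = _
  simp only [phiMap_iterate_glimIterate hglim hp]
  exact hglim.map_const _

lemma phiMap_limit_iterate_corrComp (hglim : IsBanachLimit glim)
    (hp : ∀ k x y v w, ‖(corrComp p)^[k] p x y v w‖ ≤ 1) :
    phiMap (fun x y v w => glim fun k => (corrComp p)^[k] p x y v w)
      = glimIterate glim (phiMap p) := by
  funext A
  ext x y
  calc phiMap (fun x y v w => glim fun k => (corrComp p)^[k] p x y v w) A x y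
      = glim fun k => phiMap ((corrComp p)^[k] p) A x y := by
        simp only [phiMap, of_apply, mul_comm _ (A _ _), ← glim.map_const_mul, ← glim.map_sum_fun]
    _ = glim fun k => ((phiMap p)^[k + 1] A) x y := by simp only [phiMap_iterate_corrComp]
    _ = glimIterate glim (phiMap p) A x y :=
        hglim.2.2 (fun k => ((phiMap p)^[k] A) x y) ⟨_, (norm_phiMap_iterate_apply_le hp · A x y)⟩

end GlimIterate

/-- Starting from a winning synchronous vectorial strategy `p` for the homomorphism game
from `G` to `G`, the Banach-generalized-limit correlation
`r(x,y|v,w) = glim (k ↦ p_k(x,y|v,w))` of the iterates `p₁ = p`,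
`p_{k+1}(x,y|v,w) = Σ_{a,b} p(x,y|a,b) p_k(a,b|v,w)`, is again a winning synchronous
vectorial strategy for the game from `G` to `G`; moreover `φ_r = ψ_p`, i.e.
`φ_r(A)_{x,y} = glim (k ↦ (φ_p^k(A))_{x,y})`, and
`r(x,y|v,w) = Σ_{a,b} r(x,y|a,b) r(a,b|v,w)`, so `φ_r ∘ φ_r = φ_r`. -/
theorem glim_of_iterates_is_idempotent_strategy {n : ℕ} (G : SimpleGraph (Fin n))
    (p : Fin n → Fin n → Fin n → Fin n → ℂ)
    (hp : IsVectCorrelation p) (hpsync : Synchronous p) (hpwin : WinningFor G G p)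
    (pk : ℕ → Fin n → Fin n → Fin n → Fin n → ℂ)
    (hpk1 : pk 1 = p)
    (hpkrec : ∀ k, 1 ≤ k → ∀ x y v w : Fin n,
      pk (k + 1) x y v w = ∑ a, ∑ b, p x y a b * pk k a b v w)
    (glim : (ℕ → ℂ) →ₗ[ℂ] ℂ) (hglim : IsBanachLimit glim)
    (r : Fin n → Fin n → Fin n → Fin n → ℂ)
    (hr : ∀ x y v w : Fin n, r x y v w = glim (fun k => pk (k + 1) x y v w)) :
    IsVectCorrelation r ∧ Synchronous r ∧ WinningFor G G r ∧
    (∀ A : Matrix (Fin n) (Fin n) ℂ,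
      phiMap r A = Matrix.of fun x y => glim (fun k => ((phiMap p)^[k] A) x y)) ∧
    (∀ x y v w : Fin n, r x y v w = ∑ a, ∑ b, r x y a b * r a b v w) ∧
    phiMap r ∘ phiMap r = phiMap r := by
  obtain ⟨R⟩ := hp
  let := R.nacg; let := R.ips
  have hR : IsRealization p R.X R.Y := ⟨R.orthX, R.orthY, R.sumEq, R.normOne, R.eq⟩
  choose X Y hXY using hR.exists_euclidean_iterate
  have hbound k := (hXY k).norm_le_one
  have hp₀ : ∀ x y v w, 0 ≤ p x y v w := fun x y v w => R.nonneg v w x y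
  have hnonneg : ∀ k x y v w, 0 ≤ (corrComp p)^[k] p x y v w :=
    Function.Iterate.rec (fun q : Fin n → Fin n → Fin n → Fin n → ℂ => ∀ x y v w, 0 ≤ q x y v w)
      hp₀ fun _ => corrComp_nonneg hp₀
  have hrdef : r = fun x y v w => glim fun k => (corrComp p)^[k] p x y v w := by
    funext x y v w
    simp only [hr, eq_iterate_corrComp hpk1 hpkrec]
  obtain ⟨X', Y', hrreal⟩ := IsRealization.limit glim hglim.map_const hglim.2.1 hXY
  have hphi : phiMap r = glimIterate glim (phiMap p) :=
    hrdef ▸ phiMap_limit_iterate_corrComp hglim hbound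
  have hidem : phiMap r ∘ phiMap r = phiMap r := hphi ▸ glimIterate_idempotent hglim hbound
  refine ⟨hrdef ▸ hrreal.isVectCorrelation fun v w x y =>
      hglim.2.1 _ ⟨1, fun k => hbound k x y v w⟩ fun k => hnonneg k x y v w,
    hrdef ▸ Synchronous.limit glim hglim.map_const
      (Function.Iterate.rec _ hpsync fun _ => hpsync.comp),
    hrdef ▸ WinningFor.limit glim hglim.map_const
      (Function.Iterate.rec _ hpwin fun _ => hpwin.comp),
    fun A => congrFun hphi A,
    fun x y v w => (congrArg (· x y v w) (corrComp_self_eq_of_phiMap_idempotent hidem)).symm,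
    hidem⟩
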